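/- arXiv:math/0610905 — 2 statements merged into one kernel-verified Lean document; each statement's English description precedes it below -/
import Mathlib

section
/- Let Ψ be an Orlicz function and z ∈ 𝔻 = {w ∈ ℂ : |w| < 1}. Let D(z) = sup{ |f(z)| : f holomorphic on 𝔻 and ∫_𝕋 Ψ(|f(r·w)|) dm(w) ≤ 1 for every r ∈ [0,1) } (the norm of the evaluation functional at z on the unit ball of the Hardy–Orlicz space H^Ψ). Then (1/4)·Ψ⁻¹((1+|z|)/(1−|z|)) ≤ D(z) ≤ 2·Ψ⁻¹((1+|z|)/(1−|z|)); in particular (1/4)·Ψ⁻¹(1/(1−|z|)) ≤ D(z) ≤ 4·Ψ⁻¹(1/(1−|z|)). -/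
/-!
Upper bound: by the Poisson formula on the circle of radius `s`, `f z` is an average of `f`
against a kernel bounded by `(s + |z|) / (s - |z|)`. With `a = Ψ⁻¹ ((1 + |z|) / (1 - |z|))`,
convexity and `Ψ 0 = 0` give `Ψ a * y ≤ Ψ a * a + a * Ψ y`, so averaging and letting `s → 1`
yields `|f z| ≤ 2 a`.

Lower bound: `w ↦ a ((1 - |z|) / (1 - z̄ w))²` takes the value `a / (1 + |z|)² ≥ a / 4` at `z`,
and on each circle `Ψ` of its modulus is at most `Ψ a` times a constant multiple of the Poisson
kernel at `r z`, whose average is `1`; so it lies in the unit ball of `H^Ψ`.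

The bounds through `Ψ⁻¹ (1 / (1 - |z|))` follow from the monotonicity of `Ψ⁻¹` and
`Ψ⁻¹ (2 y) ≤ 2 Ψ⁻¹ y`.
-/

open MeasureTheory

/-- The normalized Lebesgue (Haar) measure on the unit circle `𝕋 ⊆ ℂ`,
realized as a measure on `ℂ` carried by the circle. -/
noncomputable def circleMeasure : Measure ℂ :=
  (ENNReal.ofReal (2 * Real.pi))⁻¹ •
    (Measure.map (fun t : ℝ => Complex.exp (t * Complex.I))
      (volume.restrict (Set.Ioc 0 (2 * Real.pi))))

/-- The norm of the evaluation functional at `z` on the unit ball of the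
Hardy–Orlicz space `H^Ψ`. -/
noncomputable def hardyEvalNorm (Ψ : ℝ → ℝ) (z : ℂ) : ℝ :=
  sSup {x : ℝ | ∃ f : ℂ → ℂ, DifferentiableOn ℂ f (Metric.ball 0 1) ∧
    (∀ r : ℝ, 0 ≤ r → r < 1 →
      ∫⁻ w, ENNReal.ofReal (Ψ (‖f ((r : ℂ) * w)‖)) ∂circleMeasure ≤ 1) ∧
    x = ‖f z‖}

open Metric Real Complex Set Filter Topology ComplexConjugate

theorem lintegral_circleMeasure_ofReal {g : ℂ → ℝ} (hg : ContinuousOn g (sphere 0 1))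
    (hg₀ : ∀ w ∈ sphere (0 : ℂ) 1, 0 ≤ g w) :
    ∫⁻ w, ENNReal.ofReal (g w) ∂circleMeasure = ENNReal.ofReal (circleAverage g 0 1) := by
  have he : Measurable fun t : ℝ => Complex.exp (t * I) := by fun_prop
  have hsphere : ∀ᵐ w ∂(volume.restrict (Ioc 0 (2 * π))).map (fun t : ℝ => Complex.exp (t * I)),
      w ∈ sphere (0 : ℂ) 1 :=
    (ae_map_iff he.aemeasurable isClosed_sphere.measurableSet).2 <|
      Eventually.of_forall fun t => by simp
  have hint : IntegrableOn (fun t => g (circleMap 0 1 t)) (Ioc 0 (2 * π)) :=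
    (hg.comp_continuous (continuous_circleMap 0 1)
      (circleMap_mem_sphere 0 zero_le_one)).integrableOn_Ioc
  rw [circleAverage_def, intervalIntegral.integral_of_le two_pi_pos.le, smul_eq_mul,
    ENNReal.ofReal_mul (by positivity), ENNReal.ofReal_inv_of_pos two_pi_pos,
    circleMeasure, lintegral_smul_measure, lintegral_map' ?meas he.aemeasurable,
    ofReal_integral_eq_lintegral_ofReal hint
      (Eventually.of_forall fun t => hg₀ _ (circleMap_mem_sphere 0 zero_le_one t))]
  · simp [circleMap]
  · rw [← Measure.restrict_eq_self_of_ae_mem hsphere]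
    exact (ENNReal.continuous_ofReal.comp_continuousOn hg).aemeasurable
      isClosed_sphere.measurableSet

theorem ContinuousOn.orlicz_norm_comp_const_mul {Ψ : ℝ → ℝ} (hΨ_cont : ContinuousOn Ψ (Ici 0))
    {f : ℂ → ℂ} (hf : ContinuousOn f (ball 0 1)) {r : ℝ} (hr₀ : 0 ≤ r) (hr₁ : r < 1) :
    ContinuousOn (fun w : ℂ => Ψ ‖f (r * w)‖) (sphere 0 1) := by
  have hmaps : MapsTo (fun w : ℂ => (r : ℂ) * w) (sphere 0 1) (ball 0 1) := fun w hw => by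
    simpa [abs_of_nonneg hr₀, mem_sphere_zero_iff_norm.1 hw] using hr₁
  exact hΨ_cont.comp (hf.comp (by fun_prop) hmaps).norm fun w _ => norm_nonneg _

theorem lintegral_circleMeasure_orlicz_le_one_iff {Ψ : ℝ → ℝ}
    (hΨ_nonneg : ∀ x, 0 ≤ x → 0 ≤ Ψ x) (hΨ_cont : ContinuousOn Ψ (Ici 0)) {f : ℂ → ℂ}
    (hf : ContinuousOn f (ball 0 1)) {r : ℝ} (hr₀ : 0 ≤ r) (hr₁ : r < 1) :
    ∫⁻ w, ENNReal.ofReal (Ψ ‖f (r * w)‖) ∂circleMeasure ≤ 1 ↔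
      circleAverage (fun w => Ψ ‖f (r * w)‖) 0 1 ≤ 1 := by
  rw [lintegral_circleMeasure_ofReal (hΨ_cont.orlicz_norm_comp_const_mul hf hr₀ hr₁)
    fun w _ => hΨ_nonneg _ (norm_nonneg _), ENNReal.ofReal_le_one]

theorem Real.norm_circleAverage_le {E : Type*} [NormedAddCommGroup E] [NormedSpace ℝ E]
    (f : ℂ → E) (c : ℂ) (R : ℝ) :
    ‖circleAverage f c R‖ ≤ circleAverage (fun w => ‖f w‖) c R := by
  rw [circleAverage_def, circleAverage_def, norm_smul, smul_eq_mul, Real.norm_eq_abs,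
    abs_of_pos (inv_pos.2 two_pi_pos)]
  gcongr
  exact intervalIntegral.norm_integral_le_integral_norm two_pi_pos.le

theorem Real.circleAverage_const_mul (a : ℝ) (g : ℂ → ℝ) (c : ℂ) (R : ℝ) :
    circleAverage (fun w => a * g w) c R = a * circleAverage g c R :=
  circleAverage_fun_smul (a := a) (f := g)

theorem continuousOn_poissonKernel_sphere {c w : ℂ} {R : ℝ} (hw : w ∈ ball c R) :
    ContinuousOn (poissonKernel c w) (sphere c |R|) := by
  rw [poissonKernel_eq_re_herglotzRieszKernel]
  exact continuous_re.comp_continuousOn (continuousOn_herglotzRieszKernel_sphere hw)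

theorem circleAverage_poissonKernel {c w : ℂ} {R : ℝ} (hw : w ∈ ball c R) :
    circleAverage (poissonKernel c w) c R = 1 := by
  have h := (diffContOnCl_const (c := (1 : ℂ)) (s := ball c R)).circleAverage_poissonKernel_smul hw
  rw [circleAverage_def] at h ⊢
  apply Complex.ofReal_injective
  simpa [Pi.smul_apply', intervalIntegral.integral_ofReal] using h

theorem poissonKernel_nonneg {c w z : ℂ} {R : ℝ} (hz : z ∈ sphere c R) (hw : w ∈ ball c R) :
    0 ≤ poissonKernel c w z := by
  have hR : ‖w - c‖ < R := mem_ball_iff_norm.1 hw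
  rw [poissonKernel_eq_re_herglotzRieszKernel]
  refine le_trans ?_ (le_re_herglotzRieszKernel hz hw)
  apply div_nonneg <;> linarith [norm_nonneg (w - c)]

theorem poissonKernel_le {c w z : ℂ} {R : ℝ} (hz : z ∈ sphere c R) (hw : w ∈ ball c R) :
    poissonKernel c w z ≤ (R + ‖w - c‖) / (R - ‖w - c‖) := by
  rw [poissonKernel_eq_re_herglotzRieszKernel]
  exact re_herglotzRieszKernel_le hz hw

theorem DiffContOnCl.norm_le_circleAverage_poissonKernel_mul_norm {E : Type*}
    [NormedAddCommGroup E] [NormedSpace ℂ E] [CompleteSpace E] {f : ℂ → E} {c z : ℂ} {R : ℝ}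
    (hf : DiffContOnCl ℂ f (ball c R)) (hz : z ∈ ball c R) :
    ‖f z‖ ≤ Real.circleAverage (fun w => poissonKernel c z w * ‖f w‖) c R := by
  have hR : |R| = R := abs_of_pos (pos_of_mem_ball hz)
  calc ‖f z‖ = ‖Real.circleAverage (poissonKernel c z • f) c R‖ := by
        rw [hf.circleAverage_poissonKernel_smul hz]
    _ ≤ Real.circleAverage (fun w => ‖(poissonKernel c z • f) w‖) c R := norm_circleAverage_le _ _ _
    _ = Real.circleAverage (fun w => poissonKernel c z w * ‖f w‖) c R :=
        circleAverage_congr_sphere fun w hw => by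
          rw [hR] at hw
          simp [norm_smul, abs_of_nonneg (poissonKernel_nonneg hw hz)]

theorem ConvexOn.map_mul_le_of_map_zero {Ψ : ℝ → ℝ} (hΨ : ConvexOn ℝ (Ici 0) Ψ) (hΨ₀ : Ψ 0 = 0)
    {t x : ℝ} (ht₀ : 0 ≤ t) (ht₁ : t ≤ 1) (hx : 0 ≤ x) : Ψ (t * x) ≤ t * Ψ x := by
  simpa [hΨ₀] using hΨ.2 self_mem_Ici (mem_Ici.2 hx) (sub_nonneg.2 ht₁) ht₀ (by ring)

theorem ConvexOn.mul_le_mul_add_mul {Ψ : ℝ → ℝ} (hΨ : ConvexOn ℝ (Ici 0) Ψ) (hΨ₀ : Ψ 0 = 0)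
    (hΨ_nonneg : ∀ x, 0 ≤ x → 0 ≤ Ψ x) {a y : ℝ} (ha : 0 ≤ a) (hy : 0 ≤ y) :
    Ψ a * y ≤ Ψ a * a + a * Ψ y := by
  rcases le_or_gt y a with hya | hay
  · nlinarith [hΨ_nonneg a ha, hΨ_nonneg y hy]
  · have hy₀ : 0 < y := ha.trans_lt hay
    have h := hΨ.map_mul_le_of_map_zero hΨ₀ (div_nonneg ha hy) ((div_le_one hy₀).2 hay.le) hy
    rw [div_mul_cancel₀ _ hy₀.ne', div_mul_eq_mul_div, le_div_iff₀ hy₀] at h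
    nlinarith [hΨ_nonneg a ha]

theorem orlicz_mul_norm_le_of_circleAverage_le {Ψ : ℝ → ℝ} (hΨ : ConvexOn ℝ (Ici 0) Ψ)
    (hΨ₀ : Ψ 0 = 0) (hΨ_nonneg : ∀ x, 0 ≤ x → 0 ≤ Ψ x) (hΨ_cont : ContinuousOn Ψ (Ici 0))
    {f : ℂ → ℂ} {s : ℝ} {z : ℂ} (hf : DiffContOnCl ℂ f (ball 0 s)) (hz : z ∈ ball 0 s)
    (hf_avg : circleAverage (fun w => Ψ ‖f w‖) 0 s ≤ 1) {a : ℝ} (ha : 0 ≤ a) :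
    Ψ a * ‖f z‖ ≤ Ψ a * a + a * ((s + ‖z‖) / (s - ‖z‖)) := by
  have hs₀ : 0 < s := pos_of_mem_ball hz
  have hs : |s| = s := abs_of_pos hs₀
  set M := (s + ‖z‖) / (s - ‖z‖)
  have hP : ∀ w ∈ sphere (0 : ℂ) |s|, 0 ≤ poissonKernel 0 z w ∧ poissonKernel 0 z w ≤ M :=
    fun w hw => by
      rw [hs] at hw
      exact ⟨poissonKernel_nonneg hw hz, by simpa using poissonKernel_le hw hz⟩
  have hnorm_cont : ContinuousOn (fun w => ‖f w‖) (sphere 0 |s|) :=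
    (hf.continuousOn.mono (by rw [hs, closure_ball _ hs₀.ne']; exact sphere_subset_closedBall)).norm
  have hΨf_cont : ContinuousOn (fun w => Ψ ‖f w‖) (sphere 0 |s|) :=
    hΨ_cont.comp hnorm_cont fun w _ => norm_nonneg (f w)
  have hP_cont := continuousOn_poissonKernel_sphere (R := s) hz
  have hP_int : CircleIntegrable (fun w => Ψ a * a * poissonKernel 0 z w) 0 s :=
    (continuousOn_const.mul hP_cont).circleIntegrable'
  have hΨf_int : CircleIntegrable (fun w => a * M * Ψ ‖f w‖) 0 s :=
    (continuousOn_const.mul hΨf_cont).circleIntegrable'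
  calc Ψ a * ‖f z‖
      ≤ circleAverage (fun w => Ψ a * (poissonKernel 0 z w * ‖f w‖)) 0 s := by
        rw [circleAverage_const_mul]
        exact mul_le_mul_of_nonneg_left
          (hf.norm_le_circleAverage_poissonKernel_mul_norm hz) (hΨ_nonneg a ha)
    _ ≤ circleAverage (fun w => Ψ a * a * poissonKernel 0 z w + a * M * Ψ ‖f w‖) 0 s := by
        refine circleAverage_mono
          (continuousOn_const.mul (hP_cont.mul hnorm_cont)).circleIntegrable'
          (hP_int.add hΨf_int) fun w hw => ?_
        have hsplit := hΨ.mul_le_mul_add_mul hΨ₀ hΨ_nonneg ha (norm_nonneg (f w))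
        have hΨf := hΨ_nonneg _ (norm_nonneg (f w))
        linarith [mul_le_mul_of_nonneg_left hsplit (hP w hw).1,
          mul_le_mul_of_nonneg_right (hP w hw).2 (mul_nonneg ha hΨf)]
    _ = Ψ a * a + a * M * circleAverage (fun w => Ψ ‖f w‖) 0 s := by
        rw [circleAverage_fun_add hP_int hΨf_int, circleAverage_const_mul,
          circleAverage_const_mul, circleAverage_poissonKernel hz, mul_one]
    _ ≤ Ψ a * a + a * M := by
        have hM : 0 ≤ M := div_nonneg (by positivity) (by linarith [mem_ball_zero_iff.1 hz])
        nlinarith [mul_le_mul_of_nonneg_left hf_avg (mul_nonneg ha hM)]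

theorem orlicz_mul_norm_le_of_lintegral_le_one {Ψ : ℝ → ℝ} (hΨ : ConvexOn ℝ (Ici 0) Ψ)
    (hΨ₀ : Ψ 0 = 0) (hΨ_nonneg : ∀ x, 0 ≤ x → 0 ≤ Ψ x) (hΨ_cont : ContinuousOn Ψ (Ici 0))
    {f : ℂ → ℂ} (hf : DifferentiableOn ℂ f (ball 0 1))
    (hf_int : ∀ r : ℝ, 0 ≤ r → r < 1 →
      ∫⁻ w, ENNReal.ofReal (Ψ ‖f (r * w)‖) ∂circleMeasure ≤ 1)
    {z : ℂ} (hz : ‖z‖ < 1) {a : ℝ} (ha : 0 ≤ a) :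
    Ψ a * ‖f z‖ ≤ Ψ a * a + a * ((1 + ‖z‖) / (1 - ‖z‖)) := by
  -- `f` need not extend continuously to the closed disc: use the circles of radius `s < 1`
  have hs : ∀ s ∈ Ioo ‖z‖ 1, Ψ a * ‖f z‖ ≤ Ψ a * a + a * ((s + ‖z‖) / (s - ‖z‖)) := by
    rintro s ⟨hzs, hs₁⟩
    refine orlicz_mul_norm_le_of_circleAverage_le hΨ hΨ₀ hΨ_nonneg hΨ_cont
      (hf.diffContOnCl_ball (closedBall_subset_ball hs₁)) (mem_ball_zero_iff.2 hzs) ?_ ha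
    have h := (lintegral_circleMeasure_orlicz_le_one_iff hΨ_nonneg hΨ_cont hf.continuousOn
      ((norm_nonneg z).trans hzs.le) hs₁).1 (hf_int s ((norm_nonneg z).trans hzs.le) hs₁)
    simpa [circleAverage_eq_circleAverage_zero_one (R := s)] using h
  have hlim : Tendsto (fun s => Ψ a * a + a * ((s + ‖z‖) / (s - ‖z‖))) (𝓝[<] 1)
      (𝓝 (Ψ a * a + a * ((1 + ‖z‖) / (1 - ‖z‖)))) := by
    refine (ContinuousAt.tendsto ?_).mono_left nhdsWithin_le_nhds
    exact continuousAt_const.add (continuousAt_const.mul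
      ((continuousAt_id.add continuousAt_const).div (continuousAt_id.sub continuousAt_const)
        (sub_ne_zero.2 hz.ne')))
  exact ge_of_tendsto hlim (eventually_of_mem (Ioo_mem_nhdsLT hz) hs)

theorem norm_le_two_mul_of_lintegral_le_one {Ψ : ℝ → ℝ} (hΨ : ConvexOn ℝ (Ici 0) Ψ)
    (hΨ₀ : Ψ 0 = 0) (hΨ_nonneg : ∀ x, 0 ≤ x → 0 ≤ Ψ x) (hΨ_cont : ContinuousOn Ψ (Ici 0))
    {f : ℂ → ℂ} (hf : DifferentiableOn ℂ f (ball 0 1))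
    (hf_int : ∀ r : ℝ, 0 ≤ r → r < 1 →
      ∫⁻ w, ENNReal.ofReal (Ψ ‖f (r * w)‖) ∂circleMeasure ≤ 1)
    {z : ℂ} (hz : ‖z‖ < 1) {a : ℝ} (ha : 0 ≤ a) (hΨa : Ψ a = (1 + ‖z‖) / (1 - ‖z‖)) :
    ‖f z‖ ≤ 2 * a := by
  have h := orlicz_mul_norm_le_of_lintegral_le_one hΨ hΨ₀ hΨ_nonneg hΨ_cont hf hf_int hz ha
  have hΨa_pos : 0 < Ψ a := hΨa ▸ div_pos (by positivity) (by linarith)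
  rw [← hΨa] at h
  nlinarith

theorem hardyEvalNorm_le_two_mul {Ψ : ℝ → ℝ} (hΨ : ConvexOn ℝ (Ici 0) Ψ)
    (hΨ₀ : Ψ 0 = 0) (hΨ_nonneg : ∀ x, 0 ≤ x → 0 ≤ Ψ x) (hΨ_cont : ContinuousOn Ψ (Ici 0))
    {z : ℂ} (hz : ‖z‖ < 1) {a : ℝ} (ha : 0 ≤ a) (hΨa : Ψ a = (1 + ‖z‖) / (1 - ‖z‖)) :
    hardyEvalNorm Ψ z ≤ 2 * a :=
  Real.sSup_le (by
    rintro x ⟨f, hf, hf_int, rfl⟩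
    exact norm_le_two_mul_of_lintegral_le_one hΨ hΨ₀ hΨ_nonneg hΨ_cont hf hf_int hz ha hΨa)
    (by positivity)

theorem one_sub_conj_mul_ne_zero {z w : ℂ} (hz : ‖z‖ ≤ 1) (hw : ‖w‖ < 1) :
    1 - conj z * w ≠ 0 := by
  rw [sub_ne_zero]
  intro h
  have : ‖conj z * w‖ < 1 := by
    rw [norm_mul, RCLike.norm_conj]
    exact (mul_le_of_le_one_left (norm_nonneg w) hz).trans_lt hw
  simp [← h] at this

theorem norm_one_sub_conj_mul {b ζ : ℂ} (hζ : ‖ζ‖ = 1) : ‖1 - conj b * ζ‖ = ‖ζ - b‖ := by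
  have hζζ : ζ * conj ζ = 1 := by
    rw [mul_conj, normSq_eq_norm_sq, hζ]; norm_num
  have h : ζ - b = ζ * conj (1 - conj b * ζ) := by
    simp only [map_sub, map_one, map_mul, conj_conj]
    linear_combination b * hζζ
  rw [h, norm_mul, hζ, one_mul, RCLike.norm_conj]

noncomputable def hardyOrliczPeak (a : ℝ) (z : ℂ) (w : ℂ) : ℂ :=
  a * ((1 - ‖z‖ : ℝ) / (1 - conj z * w)) ^ 2

theorem differentiableOn_hardyOrliczPeak (a : ℝ) {z : ℂ} (hz : ‖z‖ ≤ 1) :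
    DifferentiableOn ℂ (hardyOrliczPeak a z) (ball 0 1) := fun w hw => by
  have := one_sub_conj_mul_ne_zero hz (mem_ball_zero_iff.1 hw)
  unfold hardyOrliczPeak
  fun_prop (disch := assumption)

theorem norm_hardyOrliczPeak_self {a : ℝ} (ha : 0 ≤ a) {z : ℂ} (hz : ‖z‖ < 1) :
    ‖hardyOrliczPeak a z z‖ = a / (1 + ‖z‖) ^ 2 := by
  have h : 1 - conj z * z = ((1 - ‖z‖) * (1 + ‖z‖) : ℝ) := by
    rw [mul_comm, mul_conj, normSq_eq_norm_sq]; push_cast; ring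
  have h₁ : (0 : ℝ) < 1 - ‖z‖ := by linarith
  rw [hardyOrliczPeak, h, norm_mul, norm_pow, norm_div, norm_real, norm_real, norm_real,
    Real.norm_of_nonneg ha, Real.norm_of_nonneg h₁.le, Real.norm_of_nonneg (by positivity)]
  field_simp

theorem norm_hardyOrliczPeak_mul {a : ℝ} (ha : 0 ≤ a) (z : ℂ) (r : ℝ) {ζ : ℂ} (hζ : ‖ζ‖ = 1) :
    ‖hardyOrliczPeak a z (r * ζ)‖ = (1 - ‖z‖) ^ 2 / ‖ζ - r * z‖ ^ 2 * a := by
  have h : conj z * (r * ζ) = conj (r * z) * ζ := by simp [mul_left_comm, mul_assoc]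
  rw [hardyOrliczPeak, h, norm_mul, norm_pow, norm_div, norm_one_sub_conj_mul hζ, norm_real,
    norm_real, Real.norm_of_nonneg ha, div_pow, Real.norm_eq_abs, sq_abs, mul_comm]

theorem norm_ofReal_mul_le {r : ℝ} (hr₀ : 0 ≤ r) (hr₁ : r ≤ 1) (z : ℂ) : ‖(r : ℂ) * z‖ ≤ ‖z‖ := by
  rw [norm_mul, norm_real, Real.norm_of_nonneg hr₀]
  exact mul_le_of_le_one_left (norm_nonneg z) hr₁

theorem orlicz_norm_hardyOrliczPeak_mul_le {Ψ : ℝ → ℝ} (hΨ : ConvexOn ℝ (Ici 0) Ψ)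
    (hΨ₀ : Ψ 0 = 0) {a : ℝ} (ha : 0 ≤ a) {z : ℂ} (hz : ‖z‖ ≤ 1) {r : ℝ} (hr₀ : 0 ≤ r)
    (hr₁ : r ≤ 1) {ζ : ℂ} (hζ : ‖ζ‖ = 1) :
    Ψ ‖hardyOrliczPeak a z (r * ζ)‖ ≤ Ψ a * ((1 - ‖z‖) ^ 2 / ‖ζ - r * z‖ ^ 2) := by
  have hdist : 1 - ‖z‖ ≤ ‖ζ - r * z‖ := by
    linarith [hζ ▸ norm_sub_norm_le ζ (r * z), norm_ofReal_mul_le hr₀ hr₁ z]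
  have hu₁ : (1 - ‖z‖) ^ 2 / ‖ζ - r * z‖ ^ 2 ≤ 1 :=
    div_le_one_of_le₀ (pow_le_pow_left₀ (by linarith) hdist 2) (sq_nonneg _)
  rw [norm_hardyOrliczPeak_mul ha z r hζ, mul_comm (Ψ a)]
  exact hΨ.map_mul_le_of_map_zero hΨ₀ (by positivity) hu₁ ha

theorem poissonKernel_zero_of_norm_eq_one {w ζ : ℂ} (hζ : ‖ζ‖ = 1) :
    poissonKernel 0 w ζ = (1 - ‖w‖ ^ 2) / ‖ζ - w‖ ^ 2 := by
  simp [poissonKernel_def, hζ]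

theorem circleAverage_orlicz_hardyOrliczPeak_le {Ψ : ℝ → ℝ} (hΨ : ConvexOn ℝ (Ici 0) Ψ)
    (hΨ₀ : Ψ 0 = 0) (hΨ_nonneg : ∀ x, 0 ≤ x → 0 ≤ Ψ x) (hΨ_cont : ContinuousOn Ψ (Ici 0))
    {a : ℝ} (ha : 0 ≤ a) {z : ℂ} (hz : ‖z‖ < 1) {r : ℝ} (hr₀ : 0 ≤ r) (hr₁ : r < 1) :
    circleAverage (fun ζ => Ψ ‖hardyOrliczPeak a z (r * ζ)‖) 0 1 ≤
      Ψ a * ((1 - ‖z‖) / (1 + ‖z‖)) := by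
  have hrz := norm_ofReal_mul_le hr₀ hr₁.le z
  have hrz_mem : (r : ℂ) * z ∈ ball 0 1 := mem_ball_zero_iff.2 (hrz.trans_lt hz)
  have hden : 0 < 1 - ‖(r : ℂ) * z‖ ^ 2 := by nlinarith [norm_nonneg ((r : ℂ) * z)]
  set c := (1 - ‖z‖) ^ 2 / (1 - ‖(r : ℂ) * z‖ ^ 2)
  have hpointwise : ∀ ζ ∈ sphere (0 : ℂ) |1|,
      Ψ ‖hardyOrliczPeak a z (r * ζ)‖ ≤ Ψ a * c * poissonKernel 0 (r * z) ζ := fun ζ hζ => by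
    rw [abs_one, mem_sphere_zero_iff_norm] at hζ
    have hkernel : (1 - ‖z‖) ^ 2 / ‖ζ - r * z‖ ^ 2 = c * poissonKernel 0 (r * z) ζ := by
      rw [poissonKernel_zero_of_norm_eq_one hζ, mul_div_assoc', div_mul_cancel₀ _ hden.ne']
    rw [mul_assoc, ← hkernel]
    exact orlicz_norm_hardyOrliczPeak_mul_le hΨ hΨ₀ ha hz.le hr₀ hr₁.le hζ
  have hpeak_cont := hΨ_cont.orlicz_norm_comp_const_mul
    (differentiableOn_hardyOrliczPeak a hz.le).continuousOn hr₀ hr₁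
  have hP_cont : ContinuousOn (fun ζ => Ψ a * c * poissonKernel 0 (r * z) ζ) (sphere 0 |1|) :=
    continuousOn_const.mul (continuousOn_poissonKernel_sphere hrz_mem)
  calc circleAverage (fun ζ => Ψ ‖hardyOrliczPeak a z (r * ζ)‖) 0 1
      ≤ circleAverage (fun ζ => Ψ a * c * poissonKernel 0 (r * z) ζ) 0 1 :=
        circleAverage_mono (hpeak_cont.circleIntegrable zero_le_one) hP_cont.circleIntegrable'
          hpointwise
    _ = Ψ a * c := by rw [circleAverage_const_mul, circleAverage_poissonKernel hrz_mem, mul_one]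
    _ ≤ Ψ a * ((1 - ‖z‖) / (1 + ‖z‖)) := by
        have hz₁ : 0 < 1 - ‖z‖ := by linarith
        have hc : c ≤ (1 - ‖z‖) ^ 2 / ((1 - ‖z‖) * (1 + ‖z‖)) :=
          div_le_div_of_nonneg_left (sq_nonneg _) (by nlinarith [norm_nonneg z])
            (by nlinarith [norm_nonneg ((r : ℂ) * z)])
        rw [sq, mul_div_mul_left _ _ hz₁.ne'] at hc
        exact mul_le_mul_of_nonneg_left hc (hΨ_nonneg a ha)

theorem quarter_le_hardyEvalNorm {Ψ : ℝ → ℝ} (hΨ : ConvexOn ℝ (Ici 0) Ψ)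
    (hΨ₀ : Ψ 0 = 0) (hΨ_nonneg : ∀ x, 0 ≤ x → 0 ≤ Ψ x) (hΨ_cont : ContinuousOn Ψ (Ici 0))
    {z : ℂ} (hz : ‖z‖ < 1) {a : ℝ} (ha : 0 ≤ a) (hΨa : Ψ a = (1 + ‖z‖) / (1 - ‖z‖)) :
    1 / 4 * a ≤ hardyEvalNorm Ψ z := by
  have hpeak_int (r : ℝ) (hr₀ : 0 ≤ r) (hr₁ : r < 1) :
      ∫⁻ w, ENNReal.ofReal (Ψ ‖hardyOrliczPeak a z (r * w)‖) ∂circleMeasure ≤ 1 := by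
    rw [lintegral_circleMeasure_orlicz_le_one_iff hΨ_nonneg hΨ_cont
      (differentiableOn_hardyOrliczPeak a hz.le).continuousOn hr₀ hr₁]
    refine (circleAverage_orlicz_hardyOrliczPeak_le hΨ hΨ₀ hΨ_nonneg hΨ_cont ha hz hr₀
      hr₁).trans_eq ?_
    have : 0 < 1 - ‖z‖ := by linarith
    rw [hΨa]
    field_simp
  have hbdd : BddAbove {x : ℝ | ∃ f : ℂ → ℂ, DifferentiableOn ℂ f (ball 0 1) ∧
      (∀ r : ℝ, 0 ≤ r → r < 1 →
        ∫⁻ w, ENNReal.ofReal (Ψ ‖f (r * w)‖) ∂circleMeasure ≤ 1) ∧ x = ‖f z‖} := by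
    refine ⟨2 * a, ?_⟩
    rintro x ⟨f, hf, hf_int, rfl⟩
    exact norm_le_two_mul_of_lintegral_le_one hΨ hΨ₀ hΨ_nonneg hΨ_cont hf hf_int hz ha hΨa
  calc 1 / 4 * a ≤ a / (1 + ‖z‖) ^ 2 := by
        rw [le_div_iff₀ (by positivity)]
        have h4 : (1 + ‖z‖) ^ 2 ≤ 4 := by nlinarith [norm_nonneg z]
        nlinarith [mul_le_mul_of_nonneg_left h4 ha]
    _ = ‖hardyOrliczPeak a z z‖ := (norm_hardyOrliczPeak_self ha hz).symm
    _ ≤ hardyEvalNorm Ψ z :=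
        le_csSup hbdd ⟨_, differentiableOn_hardyOrliczPeak a hz.le, hpeak_int, rfl⟩

theorem StrictMonoOn.le_rightInv_iff {Ψ Ψinv : ℝ → ℝ} (hΨ_mono : StrictMonoOn Ψ (Ici 0))
    (hΨinv : ∀ y, 0 ≤ y → Ψ (Ψinv y) = y) (hΨinv_nonneg : ∀ y, 0 ≤ y → 0 ≤ Ψinv y)
    {x y : ℝ} (hx : 0 ≤ x) (hy : 0 ≤ y) : x ≤ Ψinv y ↔ Ψ x ≤ y := by
  conv_rhs => rw [← hΨinv y hy]
  exact (hΨ_mono.le_iff_le hx (hΨinv_nonneg y hy)).symm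

theorem StrictMonoOn.rightInv_le_rightInv {Ψ Ψinv : ℝ → ℝ} (hΨ_mono : StrictMonoOn Ψ (Ici 0))
    (hΨinv : ∀ y, 0 ≤ y → Ψ (Ψinv y) = y) (hΨinv_nonneg : ∀ y, 0 ≤ y → 0 ≤ Ψinv y)
    {y₁ y₂ : ℝ} (hy₁ : 0 ≤ y₁) (hy : y₁ ≤ y₂) : Ψinv y₁ ≤ Ψinv y₂ := by
  rw [hΨ_mono.le_rightInv_iff hΨinv hΨinv_nonneg (hΨinv_nonneg y₁ hy₁) (hy₁.trans hy),
    hΨinv y₁ hy₁]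
  exact hy

theorem ConvexOn.rightInv_mul_le {Ψ Ψinv : ℝ → ℝ} (hΨ : ConvexOn ℝ (Ici 0) Ψ) (hΨ₀ : Ψ 0 = 0)
    (hΨ_mono : StrictMonoOn Ψ (Ici 0)) (hΨinv : ∀ y, 0 ≤ y → Ψ (Ψinv y) = y)
    (hΨinv_nonneg : ∀ y, 0 ≤ y → 0 ≤ Ψinv y) {c y : ℝ} (hc : 1 ≤ c) (hy : 0 ≤ y) :
    Ψinv (c * y) ≤ c * Ψinv y := by
  have hc₀ : 0 < c := zero_lt_one.trans_le hc
  have hcy : 0 ≤ c * y := mul_nonneg hc₀.le hy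
  rw [← inv_mul_le_iff₀ hc₀, hΨ_mono.le_rightInv_iff hΨinv hΨinv_nonneg
    (mul_nonneg (inv_nonneg.2 hc₀.le) (hΨinv_nonneg _ hcy)) hy]
  calc Ψ (c⁻¹ * Ψinv (c * y)) ≤ c⁻¹ * Ψ (Ψinv (c * y)) :=
        hΨ.map_mul_le_of_map_zero hΨ₀ (inv_nonneg.2 hc₀.le) (inv_le_one_of_one_le₀ hc)
          (hΨinv_nonneg _ hcy)
    _ = y := by rw [hΨinv _ hcy, inv_mul_cancel_left₀ hc₀.ne']

theorem stmt_2_general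
    (Ψ Ψinv : ℝ → ℝ)
    (hΨ0 : Ψ 0 = 0)
    (hΨmono : StrictMonoOn Ψ (Set.Ici 0))
    (hΨconv : StrictConvexOn ℝ (Set.Ici 0) Ψ)
    (hΨcont : ContinuousOn Ψ (Set.Ici 0))
    (hΨinv2 : ∀ y, 0 ≤ y → Ψ (Ψinv y) = y)
    (hΨinv0 : ∀ y, 0 ≤ y → 0 ≤ Ψinv y)
    (z : ℂ) (hz : ‖z‖ < 1) :
    (1 / 4) * Ψinv ((1 + ‖z‖) / (1 - ‖z‖)) ≤ hardyEvalNorm Ψ z ∧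
    hardyEvalNorm Ψ z ≤ 2 * Ψinv ((1 + ‖z‖) / (1 - ‖z‖)) ∧
    (1 / 4) * Ψinv (1 / (1 - ‖z‖)) ≤ hardyEvalNorm Ψ z ∧
    hardyEvalNorm Ψ z ≤ 4 * Ψinv (1 / (1 - ‖z‖)) := by
  have hconv := hΨconv.convexOn
  have hΨ_nonneg : ∀ x, 0 ≤ x → 0 ≤ Ψ x := fun x hx =>
    hΨ0 ▸ hΨmono.monotoneOn self_mem_Ici hx hx
  have hz₁ : 0 < 1 - ‖z‖ := by linarith
  have hA : 0 ≤ (1 + ‖z‖) / (1 - ‖z‖) := by positivity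
  have hlower := quarter_le_hardyEvalNorm hconv hΨ0 hΨ_nonneg hΨcont hz (hΨinv0 _ hA) (hΨinv2 _ hA)
  have hupper := hardyEvalNorm_le_two_mul hconv hΨ0 hΨ_nonneg hΨcont hz (hΨinv0 _ hA) (hΨinv2 _ hA)
  have h₁ : Ψinv (1 / (1 - ‖z‖)) ≤ Ψinv ((1 + ‖z‖) / (1 - ‖z‖)) :=
    hΨmono.rightInv_le_rightInv hΨinv2 hΨinv0 (by positivity)
      (div_le_div_of_nonneg_right (by linarith [norm_nonneg z]) hz₁.le)
  have h₂ : Ψinv ((1 + ‖z‖) / (1 - ‖z‖)) ≤ 2 * Ψinv (1 / (1 - ‖z‖)) :=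
    (hΨmono.rightInv_le_rightInv hΨinv2 hΨinv0 hA (by
      rw [mul_one_div]; exact div_le_div_of_nonneg_right (by linarith) hz₁.le)).trans
      (hconv.rightInv_mul_le hΨ0 hΨmono hΨinv2 hΨinv0 one_le_two (by positivity))
  exact ⟨hlower, hupper, by linarith, by linarith⟩

theorem stmt_2
    (Ψ Ψinv : ℝ → ℝ)
    (hΨ0 : Ψ 0 = 0)
    (hΨmono : StrictMonoOn Ψ (Set.Ici 0))
    (hΨconv : StrictConvexOn ℝ (Set.Ici 0) Ψ)
    (hΨcont : ContinuousOn Ψ (Set.Ici 0))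
    (hΨlim : Filter.Tendsto (fun x => Ψ x / x) Filter.atTop Filter.atTop)
    (hΨinv1 : ∀ x, 0 ≤ x → Ψinv (Ψ x) = x)
    (hΨinv2 : ∀ y, 0 ≤ y → Ψ (Ψinv y) = y)
    (hΨinv0 : ∀ y, 0 ≤ y → 0 ≤ Ψinv y)
    (z : ℂ) (hz : ‖z‖ < 1) :
    (1 / 4) * Ψinv ((1 + ‖z‖) / (1 - ‖z‖)) ≤ hardyEvalNorm Ψ z ∧
    hardyEvalNorm Ψ z ≤ 2 * Ψinv ((1 + ‖z‖) / (1 - ‖z‖)) ∧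
    (1 / 4) * Ψinv (1 / (1 - ‖z‖)) ≤ hardyEvalNorm Ψ z ∧
    hardyEvalNorm Ψ z ≤ 4 * Ψinv (1 / (1 - ‖z‖)) :=
  stmt_2_general Ψ Ψinv hΨ0 hΨmono hΨconv hΨcont hΨinv2 hΨinv0 z hz
end

section
/- Let Ψ be an Orlicz function and φ : 𝕋 → ℂ a measurable function with |φ(w)| ≤ 1 for all w ∈ 𝕋. If condition (W) holds, then m({w ∈ 𝕋 : |φ(w)| = 1}) = 0. -/
/-! If `E = {|φ| = 1}` had measure `ε > 0`, cut the circle into `N + 1` arcs of length at most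
`2π / N ≤ 1 - r`. By pigeonhole `φ` maps a part of `E` of measure `≥ ε / (N + 1)` into one arc,
and for `a` an endpoint of that arc `|u_{a,r} ∘ φ| ≥ 1/4` there. Markov's inequality for the
Luxemburg norm then gives `‖u_{a,r} ∘ φ‖_Ψ ≥ 1 / (4 Ψ⁻¹((N + 1)/ε))`, and convexity of `Ψ`
(with `Ψ 0 = 0`) yields `Ψ⁻¹(K t) ≤ K Ψ⁻¹(t)` for `K ≥ 1`. Since `N ≈ 2π / (1 - r)`, the
quantity in (W) stays above `ε / 36` for all `r`, contradicting (W). -/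

open MeasureTheory

/-- The Luxemburg norm of a complex-valued function with respect to an Orlicz
function `Ψ` and a measure `μ`, with the convention `inf ∅ = ∞`. -/
noncomputable def luxNorm {α : Type*} [MeasurableSpace α] (Ψ : ℝ → ℝ)
    (μ : Measure α) (f : α → ℂ) : ENNReal :=
  sInf {C : ENNReal | ∃ c : ℝ, 0 < c ∧ C = ENNReal.ofReal c ∧
    (∫⁻ a, ENNReal.ofReal (Ψ (‖f a‖ / c)) ∂μ) ≤ 1}

/-- The function `u_{a,r}(z) = ((1-r)/(1 - conj(a)·r·z))²`. -/
noncomputable def uar (a : ℂ) (r : ℝ) (z : ℂ) : ℂ :=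
  (((1 : ℂ) - (r : ℂ)) / (1 - (starRingEnd ℂ) a * (r : ℂ) * z)) ^ 2

open Set Complex
open scoped Real

section RightInverse

variable {f g : ℝ → ℝ}

lemma le_rightInverse_iff (hf : StrictMonoOn f (Ici 0)) (hfg : ∀ y, 0 ≤ y → f (g y) = y)
    (hg : ∀ y, 0 ≤ y → 0 ≤ g y) {x y : ℝ} (hx : 0 ≤ x) (hy : 0 ≤ y) :
    x ≤ g y ↔ f x ≤ y := by
  rw [← hf.le_iff_le hx (hg y hy), hfg y hy]

lemma lt_rightInverse_iff (hf : StrictMonoOn f (Ici 0)) (hfg : ∀ y, 0 ≤ y → f (g y) = y)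
    (hg : ∀ y, 0 ≤ y → 0 ≤ g y) {x y : ℝ} (hx : 0 ≤ x) (hy : 0 ≤ y) :
    x < g y ↔ f x < y := by
  rw [← hf.lt_iff_lt hx (hg y hy), hfg y hy]

lemma rightInverse_pos (hf0 : f 0 = 0) (hf : StrictMonoOn f (Ici 0))
    (hfg : ∀ y, 0 ≤ y → f (g y) = y) (hg : ∀ y, 0 ≤ y → 0 ≤ g y) {y : ℝ} (hy : 0 < y) :
    0 < g y := by
  rwa [lt_rightInverse_iff hf hfg hg le_rfl hy.le, hf0]

lemma rightInverse_monotoneOn (hf : StrictMonoOn f (Ici 0))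
    (hfg : ∀ y, 0 ≤ y → f (g y) = y) (hg : ∀ y, 0 ≤ y → 0 ≤ g y) :
    MonotoneOn g (Ici 0) := fun x hx y hy hxy => by
  rwa [le_rightInverse_iff hf hfg hg (hg x hx) hy, hfg x hx]

lemma ConvexOn.mul_le_apply_mul (hf : ConvexOn ℝ (Ici 0) f) (hf0 : f 0 = 0) {K x : ℝ}
    (hK : 1 ≤ K) (hx : 0 ≤ x) : K * f x ≤ f (K * x) := by
  have hK0 : 0 < K := one_pos.trans_le hK
  have h := hf.2 (mem_Ici.2 (by positivity : 0 ≤ K * x)) (mem_Ici.2 le_rfl)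
    (by positivity : 0 ≤ K⁻¹) (sub_nonneg.2 (inv_le_one_of_one_le₀ hK)) (by ring)
  simp only [smul_eq_mul, mul_zero, add_zero, hf0, inv_mul_cancel_left₀ hK0.ne'] at h
  rwa [le_inv_mul_iff₀ hK0] at h

lemma rightInverse_mul_le (hf0 : f 0 = 0) (hf : StrictMonoOn f (Ici 0))
    (hconv : ConvexOn ℝ (Ici 0) f) (hfg : ∀ y, 0 ≤ y → f (g y) = y)
    (hg : ∀ y, 0 ≤ y → 0 ≤ g y) {K t : ℝ} (hK : 1 ≤ K) (ht : 0 ≤ t) :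
    g (K * t) ≤ K * g t := by
  have hK0 : 0 ≤ K := zero_le_one.trans hK
  have h := hconv.mul_le_apply_mul hf0 hK (hg t ht)
  rw [hfg t ht] at h
  exact not_lt.1 fun hlt =>
    (lt_rightInverse_iff hf hfg hg (mul_nonneg hK0 (hg t ht)) (by positivity)).1 hlt |>.not_ge h

end RightInverse

lemma ofReal_div_le_luxNorm {α : Type*} [MeasurableSpace α] {μ : Measure α}
    {Ψ Ψinv : ℝ → ℝ} (hΨ0 : Ψ 0 = 0) (hΨmono : StrictMonoOn Ψ (Ici 0))
    (hΨinv : ∀ y, 0 ≤ y → Ψ (Ψinv y) = y) (hΨinv0 : ∀ y, 0 ≤ y → 0 ≤ Ψinv y)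
    {f : α → ℂ} (hf : Measurable f) {δ η : ℝ} (hδ : 0 < δ) (hη : 0 < η)
    (hμ : ENNReal.ofReal η ≤ μ {a | δ ≤ ‖f a‖}) :
    ENNReal.ofReal (δ / Ψinv (1 / η)) ≤ luxNorm Ψ μ f := by
  refine le_sInf ?_
  rintro _ ⟨c, hc, rfl, hint⟩
  set G := {a | δ ≤ ‖f a‖}
  have hG : MeasurableSet G := measurableSet_le measurable_const hf.norm
  have hΨδ : 0 ≤ Ψ (δ / c) :=
    hΨ0 ▸ hΨmono.monotoneOn (mem_Ici.2 le_rfl) (mem_Ici.2 (by positivity)) (by positivity)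
  have hmarkov : ENNReal.ofReal (Ψ (δ / c)) * μ G ≤ 1 :=
    calc ENNReal.ofReal (Ψ (δ / c)) * μ G
        = ∫⁻ a, G.indicator (fun _ => ENNReal.ofReal (Ψ (δ / c))) a ∂μ :=
          (lintegral_indicator_const hG _).symm
      _ ≤ ∫⁻ a, ENNReal.ofReal (Ψ (‖f a‖ / c)) ∂μ := by
          refine lintegral_mono fun a => indicator_apply_le' (fun ha => ?_) fun _ => bot_le
          exact ENNReal.ofReal_le_ofReal <| hΨmono.monotoneOn (mem_Ici.2 (by positivity))
            (mem_Ici.2 (by positivity)) (div_le_div_of_nonneg_right ha hc.le)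
      _ ≤ 1 := hint
  have hΨle : Ψ (δ / c) ≤ 1 / η := by
    rw [le_div_iff₀ hη, ← ENNReal.ofReal_le_one, ENNReal.ofReal_mul hΨδ]
    exact (mul_le_mul_right hμ _).trans hmarkov
  have hle : δ / c ≤ Ψinv (1 / η) :=
    (le_rightInverse_iff hΨmono hΨinv hΨinv0 (by positivity) (by positivity)).2 hΨle
  have hpos : 0 < Ψinv (1 / η) := rightInverse_pos hΨ0 hΨmono hΨinv hΨinv0 (by positivity)
  rw [div_le_iff₀ hc] at hle
  exact ENNReal.ofReal_le_ofReal ((div_le_iff₀ hpos).2 (by linarith))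

lemma norm_exp_mul_I_sub_exp_mul_I_le (s t : ℝ) :
    ‖exp (s * I) - exp (t * I)‖ ≤ |s - t| := by
  have h : exp (s * I) - exp (t * I) = exp (t * I) * (exp (I * ↑(s - t)) - 1) := by
    rw [mul_sub, mul_one, ← Complex.exp_add]; push_cast; ring_nf
  rw [h, norm_mul, norm_exp_ofReal_mul_I, one_mul, ← Real.norm_eq_abs]
  exact Real.norm_exp_I_mul_ofReal_sub_one_le

lemma exists_norm_sub_exp_le {z : ℂ} (hz : ‖z‖ = 1) {N : ℕ} (hN : 0 < N) :
    ∃ k ∈ Finset.range (N + 1),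
      ‖z - exp ((-π + 2 * π * k / N : ℝ) * I)‖ ≤ 2 * π / N := by
  have hN' : (0 : ℝ) < N := by exact_mod_cast hN
  set θ := arg z
  set x := (θ + π) * N / (2 * π)
  have hθ : 0 < θ + π := by linarith [neg_pi_lt_arg z]
  have hx : 0 ≤ x := by positivity
  have hxN : x ≤ N := by
    rw [div_le_iff₀ (by positivity)]; nlinarith [arg_le_pi z, Real.pi_pos]
  refine ⟨⌊x⌋₊, Finset.mem_range_succ_iff.2 (Nat.floor_le_of_le hxN), ?_⟩
  have hz' : z = exp (θ * I) := by
    simpa [hz] using (norm_mul_exp_arg_mul_I z).symm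
  rw [hz']
  refine (norm_exp_mul_I_sub_exp_mul_I_le _ _).trans ?_
  have hlo := Nat.floor_le hx
  have hhi := Nat.lt_floor_add_one x
  have hgap : θ - (-π + 2 * π * ⌊x⌋₊ / N) = 2 * π * (x - ⌊x⌋₊) / N := by
    simp only [x]; field_simp; ring
  rw [hgap, abs_of_nonneg (by have := sub_nonneg.2 hlo; positivity)]
  exact div_le_div_of_nonneg_right
    (mul_le_of_le_one_right (by positivity) (by linarith)) hN'.le

lemma one_div_four_le_norm_uar {a z : ℂ} {r : ℝ} (ha : ‖a‖ = 1) (hz : ‖z‖ = 1)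
    (hr0 : 0 ≤ r) (hr1 : r < 1) (hza : ‖z - a‖ ≤ 1 - r) :
    1 / 4 ≤ ‖uar a r z‖ := by
  have h1r : 0 < 1 - r := by linarith
  have hden : ‖1 - (starRingEnd ℂ) a * r * z‖ = ‖a - r * z‖ := by
    have hconj : (starRingEnd ℂ) a * a = 1 := by
      rw [mul_comm, mul_conj, normSq_eq_norm_sq, ha]; norm_num
    rw [show (1 : ℂ) - (starRingEnd ℂ) a * r * z = (starRingEnd ℂ) a * (a - r * z) by
      rw [mul_sub, hconj]; ring, norm_mul, norm_conj, ha, one_mul]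
  have hnum : ‖(1 : ℂ) - r‖ = 1 - r := by
    rw [← ofReal_one, ← ofReal_sub, norm_real, Real.norm_of_nonneg h1r.le]
  have hrz : ‖(r : ℂ) * z‖ = r := by
    rw [norm_mul, hz, mul_one, norm_real, Real.norm_of_nonneg hr0]
  have hup : ‖a - r * z‖ ≤ 2 * (1 - r) :=
    calc ‖a - r * z‖ = ‖(1 - r) * z - (z - a)‖ := by ring_nf
      _ ≤ ‖((1 : ℂ) - r) * z‖ + ‖z - a‖ := norm_sub_le _ _
      _ ≤ 2 * (1 - r) := by rw [norm_mul, hz, mul_one, hnum]; linarith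
  have hlo : 1 - r ≤ ‖a - r * z‖ := by
    have := norm_sub_norm_le a (r * z)
    rw [ha, hrz] at this; exact this
  have hhalf : 1 / 2 ≤ (1 - r) / ‖a - r * z‖ := by
    rw [le_div_iff₀ (h1r.trans_le hlo)]; linarith
  rw [uar, norm_pow, norm_div, hden, hnum]
  calc (1 : ℝ) / 4 = (1 / 2) ^ 2 := by norm_num
    _ ≤ ((1 - r) / ‖a - r * z‖) ^ 2 := pow_le_pow_left₀ (by norm_num) hhalf 2

lemma measurable_uar (a : ℂ) (r : ℝ) : Measurable (uar a r) := by
  unfold uar; fun_prop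

lemma MeasureTheory.exists_measure_div_card_le {α ι : Type*} [MeasurableSpace α]
    (μ : Measure α) {s : Finset ι} (hs : s.Nonempty) {E : Set α} {A : ι → Set α}
    (hE : E ⊆ ⋃ i ∈ s, A i) : ∃ i ∈ s, μ E / s.card ≤ μ (A i) := by
  refine ENNReal.exists_le_of_sum_le hs ?_
  rw [Finset.sum_const, nsmul_eq_mul,
    ENNReal.mul_div_cancel (by simpa using hs.ne_empty) (ENNReal.natCast_ne_top _)]
  exact (measure_mono hE).trans (measure_biUnion_finset_le s A)

lemma exists_measure_div_le_measure_norm_uar (μ : Measure ℂ) (φ : ℂ → ℂ) {r : ℝ}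
    (hr0 : 0 ≤ r) (hr1 : r < 1) :
    ∃ a : ℂ, ‖a‖ = 1 ∧ μ {w | ‖φ w‖ = 1} / (⌈2 * π / (1 - r)⌉₊ + 1 : ℕ) ≤
      μ {w | 1 / 4 ≤ ‖uar a r (φ w)‖} := by
  set N := ⌈2 * π / (1 - r)⌉₊
  have h1r : 0 < 1 - r := by linarith
  have hN : 0 < N := Nat.ceil_pos.2 (by positivity)
  have hNr : 2 * π / N ≤ 1 - r :=
    (div_le_iff₀ (by exact_mod_cast hN)).2 <| by
      linarith [(div_le_iff₀ h1r).1 (Nat.le_ceil (2 * π / (1 - r)))]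
  set a : ℕ → ℂ := fun k => exp ((-π + 2 * π * k / N : ℝ) * I)
  have hcover : {w | ‖φ w‖ = 1} ⊆
      ⋃ k ∈ Finset.range (N + 1), {w | 1 / 4 ≤ ‖uar (a k) r (φ w)‖} := by
    intro w hw
    obtain ⟨k, hk, hdist⟩ := exists_norm_sub_exp_le hw hN
    exact mem_biUnion hk <| one_div_four_le_norm_uar (norm_exp_ofReal_mul_I _) hw hr0 hr1
      (hdist.trans hNr)
  obtain ⟨k, -, hk⟩ := exists_measure_div_card_le μ Finset.nonempty_range_add_one hcover
  exact ⟨a k, norm_exp_ofReal_mul_I _, by simpa using hk⟩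

lemma ofReal_le_mul_iSup_luxNorm_uar {μ : Measure ℂ} {Ψ Ψinv : ℝ → ℝ} (hΨ0 : Ψ 0 = 0)
    (hΨmono : StrictMonoOn Ψ (Ici 0)) (hΨconv : ConvexOn ℝ (Ici 0) Ψ)
    (hΨinv : ∀ y, 0 ≤ y → Ψ (Ψinv y) = y) (hΨinv0 : ∀ y, 0 ≤ y → 0 ≤ Ψinv y)
    {φ : ℂ → ℂ} (hφ : Measurable φ) {ε : ℝ} (hε : 0 < ε) (hε1 : ε ≤ 1)
    (hE : ENNReal.ofReal ε ≤ μ {w | ‖φ w‖ = 1}) {r : ℝ} (hr0 : 0 ≤ r) (hr1 : r < 1) :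
    ENNReal.ofReal (ε / 36) ≤ ENNReal.ofReal (Ψinv (1 / (1 - r))) *
      ⨆ a : {a : ℂ // ‖a‖ = 1}, luxNorm Ψ μ (fun w => uar a r (φ w)) := by
  obtain ⟨a, ha, hμ⟩ := exists_measure_div_le_measure_norm_uar μ φ hr0 hr1
  set N := ⌈2 * π / (1 - r)⌉₊
  set t := 1 / (1 - r)
  have h1r : 0 < 1 - r := by linarith
  have ht : 1 ≤ t := by rw [le_div_iff₀ h1r]; linarith
  have hceil : (N : ℝ) < 2 * π * t + 1 :=
    calc (N : ℝ) < 2 * π / (1 - r) + 1 := Nat.ceil_lt_add_one (by positivity)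
      _ = 2 * π * t + 1 := by rw [div_eq_mul_one_div]
  have hN : (N + 1 : ℝ) ≤ 9 * t := by
    -- `2π + 2 < 9` and `1 ≤ t`
    nlinarith [mul_pos (sub_pos.2 Real.pi_lt_d2) (one_pos.trans_le ht)]
  have hη : ENNReal.ofReal (ε / (N + 1)) ≤ μ {w | 1 / 4 ≤ ‖uar a r (φ w)‖} := by
    rw [ENNReal.ofReal_div_of_pos (by positivity)]
    exact le_trans (by exact_mod_cast ENNReal.div_le_div_right hE _) hμ
  have hlux := ofReal_div_le_luxNorm hΨ0 hΨmono hΨinv hΨinv0 ((measurable_uar a r).comp hφ)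
    (by norm_num : (0 : ℝ) < 1 / 4) (by positivity) hη
  have hK : 1 ≤ 9 / ε := by rw [le_div_iff₀ hε]; linarith
  have hinv : Ψinv (1 / (ε / (N + 1))) ≤ 9 / ε * Ψinv t := by
    refine (rightInverse_monotoneOn hΨmono hΨinv hΨinv0 (mem_Ici.2 (by positivity))
      (mem_Ici.2 (by positivity)) ?_).trans
      (rightInverse_mul_le hΨ0 hΨmono hΨconv hΨinv hΨinv0 hK (by positivity))
    rw [one_div_div, div_le_iff₀ hε]
    have : 9 / ε * t * ε = 9 * t := by field_simp
    linarith
  have hpos : 0 < Ψinv t := rightInverse_pos hΨ0 hΨmono hΨinv hΨinv0 (by positivity)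
  calc ENNReal.ofReal (ε / 36)
      = ENNReal.ofReal (Ψinv t) * ENNReal.ofReal (1 / 4 / (9 / ε * Ψinv t)) := by
        rw [← ENNReal.ofReal_mul hpos.le]; congr 1; field_simp; ring
    _ ≤ ENNReal.ofReal (Ψinv t) * ENNReal.ofReal (1 / 4 / Ψinv (1 / (ε / (N + 1)))) := by
        gcongr
        exact rightInverse_pos hΨ0 hΨmono hΨinv hΨinv0 (by positivity)
    _ ≤ _ := by
        gcongr
        exact hlux.trans (le_iSup (fun b : {b : ℂ // ‖b‖ = 1} =>
          luxNorm Ψ μ fun w => uar b r (φ w)) ⟨a, ha⟩)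

instance isProbabilityMeasure_circleMeasure : IsProbabilityMeasure circleMeasure := by
  refine ⟨?_⟩
  have hexp : Measurable fun t : ℝ => exp (t * I) := by fun_prop
  rw [circleMeasure, Measure.smul_apply, Measure.map_apply hexp MeasurableSet.univ,
    preimage_univ, Measure.restrict_apply MeasurableSet.univ, univ_inter, Real.volume_Ioc,
    sub_zero, smul_eq_mul, ENNReal.inv_mul_cancel (by positivity) ENNReal.ofReal_ne_top]

theorem stmt_4_general
    (Ψ Ψinv : ℝ → ℝ)
    (hΨ0 : Ψ 0 = 0)
    (hΨmono : StrictMonoOn Ψ (Set.Ici 0))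
    (hΨconv : StrictConvexOn ℝ (Set.Ici 0) Ψ)
    (hΨinv2 : ∀ y, 0 ≤ y → Ψ (Ψinv y) = y)
    (hΨinv0 : ∀ y, 0 ≤ y → 0 ≤ Ψinv y)
    (φ : ℂ → ℂ) (hφmeas : Measurable φ)
    -- condition (W)
    (hW : Filter.Tendsto
      (fun r : ℝ => ENNReal.ofReal (Ψinv (1 / (1 - r))) *
        ⨆ a : {a : ℂ // ‖a‖ = 1},
          luxNorm Ψ circleMeasure (fun w => uar (a : ℂ) r (φ w)))
      (nhdsWithin 1 (Set.Iio 1)) (nhds 0)) :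
    circleMeasure {w : ℂ | ‖φ w‖ = 1} = 0 := by
  by_contra hE
  set ε := (circleMeasure {w : ℂ | ‖φ w‖ = 1}).toReal
  have hε : 0 < ε := ENNReal.toReal_pos hE (measure_ne_top _ _)
  have hε1 : ε ≤ 1 := ENNReal.toReal_le_of_le_ofReal zero_le_one (by simpa using prob_le_one)
  obtain ⟨r, hlt, hr⟩ := ((hW.eventually_lt_const (ENNReal.ofReal_pos.2
    (by positivity : 0 < ε / 36))).and (Ioo_mem_nhdsLT zero_lt_one)).exists
  exact (ofReal_le_mul_iSup_luxNorm_uar hΨ0 hΨmono hΨconv.convexOn hΨinv2 hΨinv0 hφmeas hε hε1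
    ENNReal.ofReal_toReal_le hr.1.le hr.2).not_gt hlt

theorem stmt_4
    (Ψ Ψinv : ℝ → ℝ)
    (hΨ0 : Ψ 0 = 0)
    (hΨmono : StrictMonoOn Ψ (Set.Ici 0))
    (hΨconv : StrictConvexOn ℝ (Set.Ici 0) Ψ)
    (hΨcont : ContinuousOn Ψ (Set.Ici 0))
    (hΨlim : Filter.Tendsto (fun x => Ψ x / x) Filter.atTop Filter.atTop)
    (hΨinv1 : ∀ x, 0 ≤ x → Ψinv (Ψ x) = x)
    (hΨinv2 : ∀ y, 0 ≤ y → Ψ (Ψinv y) = y)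
    (hΨinv0 : ∀ y, 0 ≤ y → 0 ≤ Ψinv y)
    (φ : ℂ → ℂ) (hφmeas : Measurable φ)
    (hφbd : ∀ w : ℂ, ‖w‖ = 1 → ‖φ w‖ ≤ 1)
    -- condition (W)
    (hW : Filter.Tendsto
      (fun r : ℝ => ENNReal.ofReal (Ψinv (1 / (1 - r))) *
        ⨆ a : {a : ℂ // ‖a‖ = 1},
          luxNorm Ψ circleMeasure (fun w => uar (a : ℂ) r (φ w)))
      (nhdsWithin 1 (Set.Iio 1)) (nhds 0)) :
    circleMeasure {w : ℂ | ‖φ w‖ = 1} = 0 :=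
  stmt_4_general Ψ Ψinv hΨ0 hΨmono hΨconv hΨinv2 hΨinv0 φ hφmeas hW
end
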